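/- The Riemannian Ricci tensor formula Ric(s) = 6(2−s²)·Id on the horizontal 4-plane ⊕ ((2+4s⁴)/s²)·Id on the vertical 3-plane, valid for s > 0, is proportional to the identity if and only if s² ∈ {1, 1/5}; for s = 1 the scalar curvature 6(8 + 1/s² − 2s²) equals 42, and for s² = 1/5 it equals 378/5 and Ric = (54/5)·Id. -/
import Mathlib


/-- The block-diagonal endomorphism of ℝ⁷ = T^h ⊕ T^v which is a·Id on the
horizontal 4-plane (coordinates 0,…,3) and b·Id on the vertical 3-plane
(coordinates 4,5,6). -/
noncomputable def blockDiag (a b : ℝ) : (Fin 7 → ℝ) →ₗ[ℝ] (Fin 7 → ℝ) :=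
  LinearMap.pi (fun i => (if (i : ℕ) < 4 then a else b) • LinearMap.proj i)

/-- The Riemannian Ricci tensor Ric(s) = 6(2−s²)·Id on T^h ⊕ ((2+4s⁴)/s²)·Id on T^v. -/
noncomputable def Ric (s : ℝ) : (Fin 7 → ℝ) →ₗ[ℝ] (Fin 7 → ℝ) :=
  blockDiag (6 * (2 - s ^ 2)) ((2 + 4 * s ^ 4) / s ^ 2)

/-- The scalar curvature Scal(s) = 6(8 + 1/s² − 2s²). -/
noncomputable def Scal (s : ℝ) : ℝ := 6 * (8 + 1 / s ^ 2 - 2 * s ^ 2)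

lemma blockDiag_apply (a b : ℝ) (x : Fin 7 → ℝ) (i : Fin 7) :
    blockDiag a b x i = (if (i : ℕ) < 4 then a else b) * x i := by
  simp only [blockDiag, LinearMap.pi_apply]
  split <;> simp

lemma blockDiag_eq_smul_id (a b c : ℝ) :
    blockDiag a b = c • (LinearMap.id : (Fin 7 → ℝ) →ₗ[ℝ] (Fin 7 → ℝ)) ↔ a = c ∧ b = c := by
  constructor
  · intro h
    constructor
    · have := congrFun (congrArg (fun f => f (Pi.single (0 : Fin 7) (1 : ℝ))) h) 0
      simpa [blockDiag_apply] using this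
    · have := congrFun (congrArg (fun f => f (Pi.single (4 : Fin 7) (1 : ℝ))) h) 4
      simpa [blockDiag_apply] using this
  · rintro ⟨rfl, rfl⟩
    ext x i
    simp [blockDiag_apply]

/-- for s > 0, the trace identity 4·6(2−s²) + 3·(2+4s⁴)/s² = Scal(s)
holds; Ric(s) is proportional to the identity iff s² ∈ {1, 1/5}; for s = 1 the
scalar curvature is 42, and for s² = 1/5 it is 378/5 with Ric = (54/5)·Id. -/
theorem stmt19 (s : ℝ) (hs : 0 < s) :
    4 * (6 * (2 - s ^ 2)) + 3 * ((2 + 4 * s ^ 4) / s ^ 2) = Scal s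
    ∧ ((∃ c : ℝ, Ric s = c • (LinearMap.id : (Fin 7 → ℝ) →ₗ[ℝ] (Fin 7 → ℝ)))
        ↔ (s ^ 2 = 1 ∨ s ^ 2 = 1 / 5))
    ∧ (s = 1 → Scal s = 42)
    ∧ (s ^ 2 = 1 / 5 → Scal s = 378 / 5
        ∧ Ric s = (54 / 5 : ℝ) • (LinearMap.id : (Fin 7 → ℝ) →ₗ[ℝ] (Fin 7 → ℝ))) := by
  have hs2 : (s : ℝ) ^ 2 ≠ 0 := pow_ne_zero 2 hs.ne'
  refine ⟨?_, ?_, ?_, ?_⟩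
  · unfold Scal; field_simp; ring
  · constructor
    · rintro ⟨c, hc⟩
      rw [Ric, blockDiag_eq_smul_id] at hc
      obtain ⟨h1, h2⟩ := hc
      have key : 6 * (2 - s ^ 2) = (2 + 4 * s ^ 4) / s ^ 2 := by rw [h1, h2]
      rw [eq_div_iff hs2] at key
      have : (s ^ 2 - 1) * (5 * s ^ 2 - 1) = 0 := by nlinarith [key]
      rcases mul_eq_zero.mp this with h | h
      · left; linarith
      · right; linarith
    · rintro (h | h)
      · refine ⟨6, by rw [Ric, blockDiag_eq_smul_id]; exact ⟨by rw [h]; norm_num,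
          by rw [show s ^ 4 = (s ^ 2) ^ 2 by ring, h]; norm_num⟩⟩
      · refine ⟨54 / 5, by rw [Ric, blockDiag_eq_smul_id]; exact ⟨by rw [h]; norm_num,
          by rw [show s ^ 4 = (s ^ 2) ^ 2 by ring, h]; norm_num⟩⟩
  · rintro rfl; norm_num [Scal]
  · intro h
    refine ⟨by rw [Scal, h]; norm_num, ?_⟩
    rw [Ric, blockDiag_eq_smul_id]
    exact ⟨by rw [h]; norm_num, by rw [show s ^ 4 = (s ^ 2) ^ 2 by ring, h]; norm_num⟩
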